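/- Let n ≥ 2 and let ≿ be a complete and transitive binary relation on [0,1]^n satisfying: (i) u ≿ v whenever u ≥ v; (ii) u ≻ v whenever u ≫ v; (iii) ≿ is symmetric; (iv) ≿ is compromising; and (v) ≿ is continuous, i.e., for every u ∈ [0,1]^n the sets {v ∈ [0,1]^n : v ≿ u} and {v ∈ [0,1]^n : u ≿ v} are closed. Then for all u, v ∈ [0,1]^n: u ≿ v if and only if min_{1 ≤ i ≤ n} u_i ≥ min_{1 ≤ i ≤ n} v_i. -/

import Mathlib

/-!
Every `u` in the cube is indifferent to the constant vector at its minimum `m`; strict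
monotonicity then compares constants. The bound `u ≿ m` is monotonicity. For `m ≿ u`, suppose
`u i < c < u j` and let `v` swap `u i` and `u j` and raise every other coordinate by `2η`. Then
`v ≿ u` by monotonicity and symmetry, and the vector equal to `c` at `i, j` and to `u + η`
elsewhere lies strictly between `u` and `v`, so by compromise it is `≿ u`. Letting `η → 0`, the
coordinates `u i` and `u j` may be merged into `c`. Merging the coordinates at or above `t` with
one below `t`, one at a time, shows that the constant `t` is `≿ u` for every `t > m`, and
continuity gives `m ≿ u`. Raising coordinates needs room below `1`, so the general case follows
from the vectors `(1 - η) u` by continuity once more.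
-/

open Set Filter Topology

lemma IsClosed.mem_of_eventually_nhdsGT {X : Type*} [TopologicalSpace X] {S : Set X}
    (hS : IsClosed S) {f : ℝ → X} (hf : Continuous f) (h : ∀ᶠ η in 𝓝[>] 0, f η ∈ S) :
    f 0 ∈ S :=
  hS.mem_of_tendsto ((hf.tendsto 0).mono_left nhdsWithin_le_nhds) h

namespace UnitCube

variable {ι : Type*}

lemma mem_Icc_iff {u : ι → ℝ} : u ∈ Icc (0 : ι → ℝ) 1 ↔ ∀ k, 0 ≤ u k ∧ u k ≤ 1 := by
  simp only [mem_Icc, Pi.le_def, Pi.zero_apply, Pi.one_apply, forall_and]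

lemma const_mem_Icc {m : ℝ} (h0 : 0 ≤ m) (h1 : m ≤ 1) : (fun _ => m) ∈ Icc (0 : ι → ℝ) 1 :=
  mem_Icc_iff.2 fun _ => ⟨h0, h1⟩

lemma iInf_const_mem_Icc [Finite ι] [Nonempty ι] {u : ι → ℝ} (hu : u ∈ Icc (0 : ι → ℝ) 1) :
    (fun _ => ⨅ k, u k) ∈ Icc (0 : ι → ℝ) 1 :=
  const_mem_Icc (le_ciInf fun k => hu.1 k)
    (ciInf_le_of_le (Finite.bddBelow_range u) (Classical.arbitrary ι) (hu.2 _))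

def TransOn (R : (ι → ℝ) → (ι → ℝ) → Prop) : Prop :=
  ∀ u v w : ι → ℝ, u ∈ Icc (0 : ι → ℝ) 1 → v ∈ Icc (0 : ι → ℝ) 1 → w ∈ Icc (0 : ι → ℝ) 1 →
    R u v → R v w → R u w

def ParetoOn (R : (ι → ℝ) → (ι → ℝ) → Prop) : Prop :=
  ∀ u v : ι → ℝ, u ∈ Icc (0 : ι → ℝ) 1 → v ∈ Icc (0 : ι → ℝ) 1 → (∀ i, v i ≤ u i) → R u v

def SymmetricOn (R : (ι → ℝ) → (ι → ℝ) → Prop) : Prop :=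
  ∀ u : ι → ℝ, u ∈ Icc (0 : ι → ℝ) 1 → ∀ π : Equiv.Perm ι, R u (u ∘ π) ∧ R (u ∘ π) u

def CompromisingOn (R : (ι → ℝ) → (ι → ℝ) → Prop) : Prop :=
  ∀ u v w : ι → ℝ, u ∈ Icc (0 : ι → ℝ) 1 → v ∈ Icc (0 : ι → ℝ) 1 → w ∈ Icc (0 : ι → ℝ) 1 →
    (∀ i, u i ≠ v i) → (∀ i, min (u i) (v i) < w i ∧ w i < max (u i) (v i)) → R w u ∨ R w v

def ClosedSectionsOn (R : (ι → ℝ) → (ι → ℝ) → Prop) : Prop :=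
  ∀ u : ι → ℝ, u ∈ Icc (0 : ι → ℝ) 1 →
    IsClosed {v : ι → ℝ | v ∈ Icc (0 : ι → ℝ) 1 ∧ R v u} ∧
    IsClosed {v : ι → ℝ | v ∈ Icc (0 : ι → ℝ) 1 ∧ R u v}

variable {R : (ι → ℝ) → (ι → ℝ) → Prop}

theorem rel_of_between (htrans : TransOn R) (hcompro : CompromisingOn R) {u v w : ι → ℝ}
    (hu : u ∈ Icc (0 : ι → ℝ) 1) (hv : v ∈ Icc (0 : ι → ℝ) 1) (hw : w ∈ Icc (0 : ι → ℝ) 1)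
    (hne : ∀ k, u k ≠ v k) (hbetween : ∀ k, min (u k) (v k) < w k ∧ w k < max (u k) (v k))
    (hvu : R v u) : R w u :=
  (hcompro u v w hu hv hw hne hbetween).elim id fun hwv => htrans _ _ _ hw hv hu hwv hvu

variable [DecidableEq ι]

lemma merge_mem_Icc {u : ι → ℝ} (hu : u ∈ Icc (0 : ι → ℝ) 1) {η : ℝ} (hη : 0 ≤ η)
    (hη1 : ∀ k, u k + η ≤ 1) {i j : ι} {c : ℝ} (hic : u i < c) (hcj : c < u j) :
    (fun k => if k = i ∨ k = j then c else u k + η) ∈ Icc (0 : ι → ℝ) 1 := by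
  have hu01 := mem_Icc_iff.1 hu
  refine mem_Icc_iff.2 fun k => ?_
  split_ifs
  · constructor <;> linarith [hu01 i, hu01 j]
  · constructor <;> linarith [hu01 k, hη1 k]

theorem rel_merge_of_pos (htrans : TransOn R) (hpareto : ParetoOn R) (hsymm : SymmetricOn R)
    (hcompro : CompromisingOn R) {u : ι → ℝ} (hu : u ∈ Icc (0 : ι → ℝ) 1) {η : ℝ}
    (hη : 0 < η) (hη1 : ∀ k, u k + 2 * η < 1) {i j : ι} {c : ℝ} (hic : u i < c) (hcj : c < u j) :
    R (fun k => if k = i ∨ k = j then c else u k + η) u := by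
  have hu01 := mem_Icc_iff.1 hu
  let v : ι → ℝ := fun k => if k = i ∨ k = j then u (Equiv.swap i j k) else u k + 2 * η
  have hswap : ∀ k, ¬(k = i ∨ k = j) → Equiv.swap i j k = k := fun k hk =>
    Equiv.swap_apply_of_ne_of_ne (fun h => hk (.inl h)) (fun h => hk (.inr h))
  have hv : v ∈ Icc (0 : ι → ℝ) 1 := mem_Icc_iff.2 fun k => by
    dsimp only [v]; split_ifs
    · exact hu01 _
    · constructor <;> linarith [hu01 k, hη1 k]
  have hw := merge_mem_Icc hu hη.le (fun k => (hη1 k).le.trans' (by linarith)) hic hcj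
  have hus : u ∘ Equiv.swap i j ∈ Icc (0 : ι → ℝ) 1 := mem_Icc_iff.2 fun k => hu01 _
  have hvu : R v u := htrans _ _ _ hv hus hu
    (hpareto _ _ hv hus fun k => by
      dsimp only [v, Function.comp_apply]; split_ifs with hk
      · rfl
      · rw [hswap k hk]; linarith)
    (hsymm u hu _).2
  refine rel_of_between htrans hcompro hu hv hw (fun k => ?_) (fun k => ?_) hvu
  · dsimp only [v]; split_ifs with hk
    · rcases hk with rfl | rfl <;> simp only [Equiv.swap_apply_left, Equiv.swap_apply_right] <;>
        linarith
    · linarith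
  · simp only [v, min_lt_iff, lt_max_iff]; split_ifs with hk
    · rcases hk with rfl | rfl <;>
        simp only [Equiv.swap_apply_left, Equiv.swap_apply_right] <;> tauto
    · exact ⟨.inl (by linarith), .inr (by linarith)⟩

variable [Finite ι]

theorem rel_merge (htrans : TransOn R) (hpareto : ParetoOn R) (hsymm : SymmetricOn R)
    (hcompro : CompromisingOn R) (hclosed : ClosedSectionsOn R) {u : ι → ℝ}
    (hu : u ∈ Icc (0 : ι → ℝ) 1) (hu1 : ∀ k, u k < 1) {i j : ι} {c : ℝ}
    (hic : u i < c) (hcj : c < u j) :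
    R (fun k => if k = i ∨ k = j then c else u k) u := by
  let w : ℝ → ι → ℝ := fun η k => if k = i ∨ k = j then c else u k + η
  have hw : Continuous w := continuous_pi fun k => by dsimp only [w]; split_ifs <;> fun_prop
  suffices h : ∀ᶠ η in 𝓝[>] 0, w η ∈ {v | v ∈ Icc (0 : ι → ℝ) 1 ∧ R v u} by
    simpa [w] using ((hclosed u hu).1.mem_of_eventually_nhdsGT hw h).2
  have hsmall : ∀ᶠ η in 𝓝[>] (0 : ℝ), 0 < η ∧ ∀ k, u k + 2 * η < 1 := by
    refine eventually_mem_nhdsWithin.and (eventually_all.2 fun k => ?_)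
    filter_upwards [Ioo_mem_nhdsGT (show 0 < (1 - u k) / 2 by linarith [hu1 k])] with η hη
    linarith [hη.2]
  filter_upwards [hsmall] with η ⟨hη, hη1⟩
  exact ⟨merge_mem_Icc hu hη.le (fun k => by linarith [hη1 k]) hic hcj,
    rel_merge_of_pos htrans hpareto hsymm hcompro hu hη hη1 hic hcj⟩

theorem rel_const_of_exists_lt (htrans : TransOn R) (hpareto : ParetoOn R)
    (hsymm : SymmetricOn R) (hcompro : CompromisingOn R) (hclosed : ClosedSectionsOn R)
    {u : ι → ℝ} (hu : u ∈ Icc (0 : ι → ℝ) 1) (hu1 : ∀ k, u k < 1) {t : ℝ} (ht : t ≤ 1)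
    (hut : ∃ i, u i < t) : R (fun _ => t) u := by
  have hu01 := mem_Icc_iff.1 hu
  obtain ⟨i, hi⟩ := hut
  have hct : (fun _ => t) ∈ Icc (0 : ι → ℝ) 1 := const_mem_Icc (by linarith [hu01 i]) ht
  by_cases hlt : ∀ k, u k < t
  · exact hpareto _ _ hct hu fun k => (hlt k).le
  obtain ⟨j, hj⟩ := not_forall.1 hlt
  obtain ⟨c, hic, hct'⟩ := exists_between hi
  let u' : ι → ℝ := fun k => if k = i ∨ k = j then c else u k
  have hu' : u' ∈ Icc (0 : ι → ℝ) 1 := mem_Icc_iff.2 fun k => by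
    dsimp only [u']; split_ifs
    · constructor <;> linarith [hu01 i]
    · exact hu01 k
  have hu'1 : ∀ k, u' k < 1 := fun k => by
    dsimp only [u']; split_ifs
    · linarith
    · exact hu1 k
  have hu'i : u' i < t := by simp only [u', true_or, if_true]; exact hct'
  have hdec : {k | t ≤ u' k}.ncard < {k | t ≤ u k}.ncard := by
    refine Set.ncard_lt_ncard ⟨fun k hk => ?_, fun hsub => ?_⟩ (Set.toFinite _)
    · simp only [Set.mem_ofPred_eq, u'] at hk ⊢
      split_ifs at hk
      · linarith
      · exact hk
    · have := hsub (show j ∈ {k | t ≤ u k} from not_lt.1 hj)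
      simp only [Set.mem_ofPred_eq, u', or_true, if_true] at this
      linarith
  exact htrans _ _ _ hct hu' hu
    (rel_const_of_exists_lt htrans hpareto hsymm hcompro hclosed hu' hu'1 ht ⟨i, hu'i⟩)
    (rel_merge htrans hpareto hsymm hcompro hclosed hu hu1 hic (hct'.trans_le (not_lt.1 hj)))
termination_by {k | t ≤ u k}.ncard

theorem rel_const_of_lt_one (htrans : TransOn R) (hpareto : ParetoOn R)
    (hsymm : SymmetricOn R) (hcompro : CompromisingOn R) (hclosed : ClosedSectionsOn R)
    {u : ι → ℝ} (hu : u ∈ Icc (0 : ι → ℝ) 1) (hu1 : ∀ k, u k < 1) {m : ℝ} (hm : m ≤ 1)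
    {i : ι} (him : u i ≤ m) : R (fun _ => m) u := by
  have hui := mem_Icc_iff.1 hu i
  let f : ℝ → ι → ℝ := fun η _ => m + η * (1 - m)
  suffices h : ∀ᶠ η in 𝓝[>] 0, f η ∈ {v | v ∈ Icc (0 : ι → ℝ) 1 ∧ R v u} by
    simpa [f] using ((hclosed u hu).1.mem_of_eventually_nhdsGT (by fun_prop) h).2
  filter_upwards [Ioo_mem_nhdsGT one_pos] with η ⟨hη0, hη1⟩
  have ht1 : m + η * (1 - m) ≤ 1 := by nlinarith
  -- `m + η (1 - m) - u i = (1 - η) (m - u i) + η (1 - u i)`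
  have hit : u i < m + η * (1 - m) := by nlinarith [hu1 i]
  exact ⟨const_mem_Icc (by nlinarith) ht1,
    rel_const_of_exists_lt htrans hpareto hsymm hcompro hclosed hu hu1 ht1 ⟨i, hit⟩⟩

theorem rel_const_of_le (htrans : TransOn R) (hpareto : ParetoOn R)
    (hsymm : SymmetricOn R) (hcompro : CompromisingOn R) (hclosed : ClosedSectionsOn R)
    {u : ι → ℝ} (hu : u ∈ Icc (0 : ι → ℝ) 1) {m : ℝ} (hm : m ≤ 1) {i : ι} (him : u i ≤ m) :
    R (fun _ => m) u := by
  have hu01 := mem_Icc_iff.1 hu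
  have hcm : (fun _ => m) ∈ Icc (0 : ι → ℝ) 1 := const_mem_Icc (by linarith [hu01 i]) hm
  let f : ℝ → ι → ℝ := fun η k => (1 - η) * u k
  suffices h : ∀ᶠ η in 𝓝[>] 0, f η ∈ {v | v ∈ Icc (0 : ι → ℝ) 1 ∧ R (fun _ => m) v} by
    simpa [f] using ((hclosed _ hcm).2.mem_of_eventually_nhdsGT (by fun_prop) h).2
  filter_upwards [Ioo_mem_nhdsGT one_pos] with η ⟨hη0, hη1⟩
  have hf : f η ∈ Icc (0 : ι → ℝ) 1 :=
    mem_Icc_iff.2 fun k => ⟨by nlinarith [hu01 k], by nlinarith [hu01 k]⟩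
  exact ⟨hf, rel_const_of_lt_one htrans hpareto hsymm hcompro hclosed hf
    (fun k => by nlinarith [hu01 k]) hm (i := i) (by nlinarith [hu01 i])⟩

theorem rel_const_iInf (htrans : TransOn R) (hpareto : ParetoOn R)
    (hsymm : SymmetricOn R) (hcompro : CompromisingOn R) (hclosed : ClosedSectionsOn R)
    [Nonempty ι] {u : ι → ℝ} (hu : u ∈ Icc (0 : ι → ℝ) 1) : R (fun _ => ⨅ k, u k) u := by
  obtain ⟨i, hi⟩ := exists_eq_ciInf_of_finite (f := u)
  exact rel_const_of_le htrans hpareto hsymm hcompro hclosed hu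
    (hi ▸ (mem_Icc_iff.1 hu i).2) hi.le

end UnitCube

theorem stmt_11_general {n : ℕ} (hn : 2 ≤ n)
    (R : (Fin n → ℝ) → (Fin n → ℝ) → Prop)
    (htrans : ∀ u v w : Fin n → ℝ, u ∈ Set.Icc (0 : Fin n → ℝ) 1 →
      v ∈ Set.Icc (0 : Fin n → ℝ) 1 → w ∈ Set.Icc (0 : Fin n → ℝ) 1 →
      R u v → R v w → R u w)
    (hpareto : ∀ u v : Fin n → ℝ, u ∈ Set.Icc (0 : Fin n → ℝ) 1 →
      v ∈ Set.Icc (0 : Fin n → ℝ) 1 → (∀ i, v i ≤ u i) → R u v)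
    (hstrict : ∀ u v : Fin n → ℝ, u ∈ Set.Icc (0 : Fin n → ℝ) 1 →
      v ∈ Set.Icc (0 : Fin n → ℝ) 1 → (∀ i, v i < u i) → R u v ∧ ¬ R v u)
    (hsymm : ∀ u : Fin n → ℝ, u ∈ Set.Icc (0 : Fin n → ℝ) 1 →
      ∀ π : Equiv.Perm (Fin n), R u (u ∘ π) ∧ R (u ∘ π) u)
    (hcompro : ∀ u v w : Fin n → ℝ, u ∈ Set.Icc (0 : Fin n → ℝ) 1 →
      v ∈ Set.Icc (0 : Fin n → ℝ) 1 → w ∈ Set.Icc (0 : Fin n → ℝ) 1 →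
      (∀ i, u i ≠ v i) →
      (∀ i, min (u i) (v i) < w i ∧ w i < max (u i) (v i)) →
      R w u ∨ R w v)
    (hconti : ∀ u : Fin n → ℝ, u ∈ Set.Icc (0 : Fin n → ℝ) 1 →
      IsClosed {v : Fin n → ℝ | v ∈ Set.Icc (0 : Fin n → ℝ) 1 ∧ R v u} ∧
      IsClosed {v : Fin n → ℝ | v ∈ Set.Icc (0 : Fin n → ℝ) 1 ∧ R u v}) :
    ∀ u v : Fin n → ℝ, u ∈ Set.Icc (0 : Fin n → ℝ) 1 →
      v ∈ Set.Icc (0 : Fin n → ℝ) 1 →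
      (R u v ↔ (⨅ i, v i) ≤ (⨅ i, u i)) := by
  have : Nonempty (Fin n) := ⟨⟨0, by omega⟩⟩
  intro u v hu hv
  have hca := UnitCube.iInf_const_mem_Icc hu
  have hcb := UnitCube.iInf_const_mem_Icc hv
  have hau := UnitCube.rel_const_iInf htrans hpareto hsymm hcompro hconti hu
  have hbv := UnitCube.rel_const_iInf htrans hpareto hsymm hcompro hconti hv
  have hua := hpareto _ _ hu hca fun i => ciInf_le (Finite.bddBelow_range u) i
  have hvb := hpareto _ _ hv hcb fun i => ciInf_le (Finite.bddBelow_range v) i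
  constructor
  · intro huv
    by_contra! hab
    exact (hstrict _ _ hcb hca fun _ => hab).2
      (htrans _ _ _ hca hv hcb (htrans _ _ _ hca hu hv hau huv) hvb)
  · intro hba
    exact htrans _ _ _ hu hcb hv
      (htrans _ _ _ hu hca hcb hua (hpareto _ _ hca hcb fun _ => hba)) hbv

/-- Analytic core of the paper's Theorem 3 (relative maximin): a complete,
transitive, monotone, strictly monotone, symmetric, compromising and continuous
relation on the unit cube coincides with comparison of minimum coordinates. -/
theorem stmt_11 {n : ℕ} (hn : 2 ≤ n)
    (R : (Fin n → ℝ) → (Fin n → ℝ) → Prop)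
    (hcomplete : ∀ u v : Fin n → ℝ, u ∈ Set.Icc (0 : Fin n → ℝ) 1 →
      v ∈ Set.Icc (0 : Fin n → ℝ) 1 → R u v ∨ R v u)
    (htrans : ∀ u v w : Fin n → ℝ, u ∈ Set.Icc (0 : Fin n → ℝ) 1 →
      v ∈ Set.Icc (0 : Fin n → ℝ) 1 → w ∈ Set.Icc (0 : Fin n → ℝ) 1 →
      R u v → R v w → R u w)
    (hpareto : ∀ u v : Fin n → ℝ, u ∈ Set.Icc (0 : Fin n → ℝ) 1 →
      v ∈ Set.Icc (0 : Fin n → ℝ) 1 → (∀ i, v i ≤ u i) → R u v)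
    (hstrict : ∀ u v : Fin n → ℝ, u ∈ Set.Icc (0 : Fin n → ℝ) 1 →
      v ∈ Set.Icc (0 : Fin n → ℝ) 1 → (∀ i, v i < u i) → R u v ∧ ¬ R v u)
    (hsymm : ∀ u : Fin n → ℝ, u ∈ Set.Icc (0 : Fin n → ℝ) 1 →
      ∀ π : Equiv.Perm (Fin n), R u (u ∘ π) ∧ R (u ∘ π) u)
    (hcompro : ∀ u v w : Fin n → ℝ, u ∈ Set.Icc (0 : Fin n → ℝ) 1 →
      v ∈ Set.Icc (0 : Fin n → ℝ) 1 → w ∈ Set.Icc (0 : Fin n → ℝ) 1 →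
      (∀ i, u i ≠ v i) →
      (∀ i, min (u i) (v i) < w i ∧ w i < max (u i) (v i)) →
      R w u ∨ R w v)
    (hconti : ∀ u : Fin n → ℝ, u ∈ Set.Icc (0 : Fin n → ℝ) 1 →
      IsClosed {v : Fin n → ℝ | v ∈ Set.Icc (0 : Fin n → ℝ) 1 ∧ R v u} ∧
      IsClosed {v : Fin n → ℝ | v ∈ Set.Icc (0 : Fin n → ℝ) 1 ∧ R u v}) :
    ∀ u v : Fin n → ℝ, u ∈ Set.Icc (0 : Fin n → ℝ) 1 →
      v ∈ Set.Icc (0 : Fin n → ℝ) 1 →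
      (R u v ↔ (⨅ i, v i) ≤ (⨅ i, u i)) :=
  stmt_11_general hn R htrans hpareto hstrict hsymm hcompro hconti
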